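/- arXiv:2305.18020 — 2 statements merged into one kernel-verified Lean document; each statement's English description precedes it below -/
import Mathlib

section
/- Suppose u'' is constant, i.e., u''(t) = c for some c > 0 and all t ∈ [0,1], and f is single-peaked: there exists m_f ∈ [0,1] such that f is nondecreasing on [0, m_f] and nonincreasing on [m_f, 1]. Let (0 = s₀ < s₁ < … < s_N = 1; x₁,…,x_N) be a solution of the dual system for some N ≥ 2, and suppose m_f ∈ [s_{j−1}, s_j] for some j ∈ {1,…,N}. Then the minimum of the interval widths w_i = s_i − s_{i−1} over i ∈ {1,…,N} is attained at some index i* with j−1 ≤ i* ≤ j+1. -/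
open MeasureTheory Set

/-- The mean of the "density" `g` conditional on the interval `(a, b)`. -/
noncomputable def condMean (g : ℝ → ℝ) (a b : ℝ) : ℝ :=
  (∫ t in a..b, t * g t) / (∫ t in a..b, g t)

/-- The dual system: cutoffs `0 = s 0 < s 1 < … < s N = 1` and signals `x 1, …, x N`. -/
def DualSystem (g w : ℝ → ℝ) (N : ℕ) (s x : ℕ → ℝ) : Prop :=
  s 0 = 0 ∧ s N = 1 ∧ (∀ k < N, s k < s (k + 1)) ∧
    (∀ k, 1 ≤ k → k ≤ N → x k = condMean g (s (k - 1)) (s k)) ∧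
    (∀ k, 1 ≤ k → k ≤ N - 1 → s k = condMean w (x k) (x (k + 1)))

lemma num_sub_eq (f : ℝ → ℝ) (hf : Continuous f) (a b r : ℝ) :
    ∫ t in a..b, (t - r) * f t = (∫ t in a..b, t * f t) - r * ∫ t in a..b, f t := by
  have h1 : IntervalIntegrable (fun t => t * f t) volume a b :=
    (continuous_id.mul hf).intervalIntegrable a b
  have h2 : IntervalIntegrable (fun t => r * f t) volume a b :=
    (continuous_const.mul hf).intervalIntegrable a b
  have e : ∀ t : ℝ, (t - r) * f t = t * f t - r * f t := fun t => by ring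
  simp_rw [e]
  rw [intervalIntegral.integral_sub h1 h2, intervalIntegral.integral_const_mul]

lemma condMean_mem_Ioo (f : ℝ → ℝ) (hf : Continuous f) (a b : ℝ) (hab : a < b)
    (hpos : ∀ t ∈ Icc a b, 0 < f t) : condMean f a b ∈ Ioo a b := by
  have hD : 0 < ∫ t in a..b, f t :=
    intervalIntegral.intervalIntegral_pos_of_pos_on (hf.intervalIntegrable a b)
      (fun t ht => hpos t ⟨ht.1.le, ht.2.le⟩) hab
  have h1 : 0 < ∫ t in a..b, (t - a) * f t :=
    intervalIntegral.intervalIntegral_pos_of_pos_on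
      (((continuous_id.sub continuous_const).mul hf).intervalIntegrable a b)
      (fun t ht => mul_pos (by linarith [ht.1]) (hpos t ⟨ht.1.le, ht.2.le⟩)) hab
  have h2 : 0 < ∫ t in a..b, (b - t) * f t :=
    intervalIntegral.intervalIntegral_pos_of_pos_on
      (((continuous_const.sub continuous_id).mul hf).intervalIntegrable a b)
      (fun t ht => mul_pos (by linarith [ht.2]) (hpos t ⟨ht.1.le, ht.2.le⟩)) hab
  rw [num_sub_eq f hf a b a] at h1
  have h2' : ∀ t : ℝ, (b - t) * f t = -((t - b) * f t) := fun t => by ring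
  simp_rw [h2', intervalIntegral.integral_neg, neg_pos, num_sub_eq f hf a b b] at h2
  constructor
  · rw [condMean, lt_div_iff₀ hD]; linarith
  · rw [condMean, div_lt_iff₀ hD]; linarith

lemma reflect_eq (f : ℝ → ℝ) (hf : Continuous f) (a b : ℝ) :
    (∫ t in a..b, (t - (a+b)/2) * f t)
      = ∫ t in ((a+b)/2)..b, (t - (a+b)/2) * (f t - f (a + b - t)) := by
  set m := (a+b)/2 with hm
  set g : ℝ → ℝ := fun t => (t - m) * f t with hg
  have hgc : Continuous g := (continuous_id.sub continuous_const).mul hf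
  have hsplit : (∫ t in a..m, g t) + (∫ t in m..b, g t) = ∫ t in a..b, g t :=
    intervalIntegral.integral_add_adjacent_intervals (hgc.intervalIntegrable a m)
      (hgc.intervalIntegrable m b)
  have href : (∫ t in m..b, g (a + b - t)) = ∫ t in a..m, g t := by
    rw [intervalIntegral.integral_comp_sub_left g (a+b)]
    have e1 : a + b - b = a := by ring
    have e2 : a + b - m = m := by rw [hm]; ring
    rw [e1, e2]
  have hcomb : ∀ t : ℝ, (t - m) * (f t - f (a + b - t)) = g t + g (a + b - t) := by
    intro t
    have : a + b - t - m = -(t - m) := by rw [hm]; ring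
    simp only [hg, this]
    ring
  simp_rw [hcomb]
  have hi2 : IntervalIntegrable (fun t => g (a + b - t)) volume m b := by
    apply Continuous.intervalIntegrable; fun_prop
  rw [intervalIntegral.integral_add (hgc.intervalIntegrable m b) hi2, href]
  linarith [hsplit]

lemma condMean_ge_mid (f : ℝ → ℝ) (hf : Continuous f) (a b : ℝ) (hab : a < b)
    (hmono : MonotoneOn f (Icc a b)) (hD : 0 < ∫ t in a..b, f t) :
    (a + b) / 2 ≤ condMean f a b := by
  have key : 0 ≤ ∫ t in a..b, (t - (a+b)/2) * f t := by
    rw [reflect_eq f hf a b]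
    apply intervalIntegral.integral_nonneg (by linarith : (a+b)/2 ≤ b)
    intro t ht
    have ht1 : a ≤ t := by have := ht.1; linarith
    have hrefl : a + b - t ∈ Icc a b := ⟨by linarith [ht.2], by linarith [ht.1]⟩
    have : f (a + b - t) ≤ f t :=
      hmono hrefl ⟨ht1, ht.2⟩ (by linarith [ht.1])
    have h1 : 0 ≤ t - (a+b)/2 := by linarith [ht.1]
    nlinarith
  rw [num_sub_eq f hf a b ((a+b)/2)] at key
  rw [condMean, le_div_iff₀ hD]
  linarith

lemma condMean_le_mid (f : ℝ → ℝ) (hf : Continuous f) (a b : ℝ) (hab : a < b)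
    (hmono : AntitoneOn f (Icc a b)) (hD : 0 < ∫ t in a..b, f t) :
    condMean f a b ≤ (a + b) / 2 := by
  have key : (∫ t in a..b, (t - (a+b)/2) * f t) ≤ 0 := by
    rw [reflect_eq f hf a b]
    rw [← neg_nonneg, ← intervalIntegral.integral_neg]
    apply intervalIntegral.integral_nonneg (by linarith : (a+b)/2 ≤ b)
    intro t ht
    have ht1 : a ≤ t := by have := ht.1; linarith
    have hrefl : a + b - t ∈ Icc a b := ⟨by linarith [ht.2], by linarith [ht.1]⟩
    have : f t ≤ f (a + b - t) :=
      hmono hrefl ⟨ht1, ht.2⟩ (by linarith [ht.1])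
    have h1 : 0 ≤ t - (a+b)/2 := by linarith [ht.1]
    nlinarith
  rw [num_sub_eq f hf a b ((a+b)/2)] at key
  rw [condMean, div_le_iff₀ hD]
  linarith

lemma condMean_const_eq (w : ℝ → ℝ) (c a b : ℝ) (hc : c ≠ 0) (hab : a < b)
    (hw : ∀ t ∈ Icc a b, w t = c) : condMean w a b = (a + b) / 2 := by
  have huIcc : uIcc a b = Icc a b := uIcc_of_le hab.le
  have e1 : (∫ t in a..b, t * w t) = ∫ t in a..b, t * c := by
    apply intervalIntegral.integral_congr
    intro t ht; rw [huIcc] at ht; simp only []; rw [hw t ht]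
  have e2 : (∫ t in a..b, w t) = ∫ t in a..b, (c : ℝ) := by
    apply intervalIntegral.integral_congr
    intro t ht; rw [huIcc] at ht; simpa using hw t ht
  rw [condMean, e1, e2, intervalIntegral.integral_mul_const, integral_id,
    intervalIntegral.integral_const]
  have hba : b - a ≠ 0 := by intro h; apply absurd hab; linarith [sub_eq_zero.mp h]
  field_simp
  ring

/-- center of scrutiny with constant curvature and single-peaked prior. -/
theorem stmt_3 (f u : ℝ → ℝ) (c : ℝ) (hc : 0 < c)
    (hf_cont : Continuous f) (hf_pos : ∀ t ∈ Icc (0:ℝ) 1, 0 < f t)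
    (hf_prob : (∫ t in (0:ℝ)..1, f t) = 1)
    (hu : ContDiff ℝ 2 u)
    (huc : ∀ t ∈ Icc (0:ℝ) 1, deriv (deriv u) t = c)
    (mf : ℝ) (hmf : mf ∈ Icc (0:ℝ) 1)
    (hfup : MonotoneOn f (Icc 0 mf)) (hfdown : AntitoneOn f (Icc mf 1))
    (N : ℕ) (hN : 2 ≤ N) (s x : ℕ → ℝ)
    (hds : DualSystem f (deriv (deriv u)) N s x)
    (j : ℕ) (hj1 : 1 ≤ j) (hjN : j ≤ N)
    (hmfj : mf ∈ Icc (s (j - 1)) (s j)) :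
    ∃ istar, 1 ≤ istar ∧ istar ≤ N ∧ j - 1 ≤ istar ∧ istar ≤ j + 1 ∧
      ∀ i, 1 ≤ i → i ≤ N → s istar - s (istar - 1) ≤ s i - s (i - 1) := by
  obtain ⟨hs0, hsN1, hmono, hx, hsmid⟩ := hds
  -- strict monotonicity of s
  have hlt : ∀ k l, k < l → l ≤ N → s k < s l := by
    intro k l hkl hlN
    induction l with
    | zero => omega
    | succ n ih =>
      rcases Nat.lt_succ_iff_lt_or_eq.mp hkl with h | h
      · exact lt_trans (ih h (by omega)) (hmono n (by omega))
      · subst h; exact hmono k (by omega)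
  have hle : ∀ k l, k ≤ l → l ≤ N → s k ≤ s l := by
    intro k l hkl hlN
    rcases eq_or_lt_of_le hkl with h | h
    · subst h; exact le_rfl
    · exact (hlt k l h hlN).le
  have hs_mem : ∀ k, k ≤ N → s k ∈ Icc (0:ℝ) 1 := by
    intro k hk
    constructor
    · rw [← hs0]; exact hle 0 k (Nat.zero_le k) hk
    · rw [← hsN1]; exact hle k N hk le_rfl
  -- x k strictly inside its interval
  have hxI : ∀ k, 1 ≤ k → k ≤ N → x k ∈ Ioo (s (k-1)) (s k) := by
    intro k h1 h2
    have hk' : k - 1 + 1 = k := by omega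
    have hsk : s (k-1) < s k := by
      have := hmono (k-1) (by omega)
      rwa [hk'] at this
    rw [hx k h1 h2]
    apply condMean_mem_Ioo f hf_cont _ _ hsk
    intro t ht
    exact hf_pos t ⟨le_trans (hs_mem (k-1) (by omega)).1 ht.1,
      le_trans ht.2 (hs_mem k h2).2⟩
  -- midpoint identity for s k
  have hmid : ∀ k, 1 ≤ k → k ≤ N - 1 → s k = (x k + x (k+1)) / 2 := by
    intro k h1 h2
    have hxk := hxI k h1 (by omega)
    have hxk1 := hxI (k+1) (by omega) (by omega)
    have e : (k+1) - 1 = k := by omega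
    rw [e] at hxk1
    have hxlt : x k < x (k+1) := lt_trans hxk.2 hxk1.1
    rw [hsmid k h1 h2]
    apply condMean_const_eq _ c _ _ hc.ne' hxlt
    intro t ht
    apply huc
    constructor
    · exact le_trans (le_trans (hs_mem (k-1) (by omega)).1 hxk.1.le) ht.1
    · exact le_trans ht.2 (le_trans hxk1.2.le (hs_mem (k+1) (by omega)).2)
  -- positivity of denominators
  have hD : ∀ k, 1 ≤ k → k ≤ N → 0 < ∫ t in (s (k-1))..(s k), f t := by
    intro k h1 h2
    have hk' : k - 1 + 1 = k := by omega
    have hsk : s (k-1) < s k := by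
      have := hmono (k-1) (by omega); rwa [hk'] at this
    apply intervalIntegral.intervalIntegral_pos_of_pos_on (hf_cont.intervalIntegrable _ _)
      _ hsk
    intro t ht
    exact hf_pos t ⟨le_trans (hs_mem (k-1) (by omega)).1 ht.1.le,
      le_trans ht.2.le (hs_mem k h2).2⟩
  -- left decreasing step
  have wleft : ∀ i, 1 ≤ i → i + 1 ≤ j - 1 → s (i+1) - s i ≤ s i - s (i-1) := by
    intro i h1 h2
    have hiN : i + 1 ≤ N := by omega
    have hsk : s (i-1) < s i := by
      have := hmono (i-1) (by omega)
      have e : i - 1 + 1 = i := by omega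
      rwa [e] at this
    have hsk2 : s i < s (i+1) := hmono i (by omega)
    have hmfu : s (i+1) ≤ mf := le_trans (hle (i+1) (j-1) h2 (by omega)) hmfj.1
    have hm1 : MonotoneOn f (Icc (s (i-1)) (s i)) :=
      hfup.mono (Icc_subset_Icc (hs_mem (i-1) (by omega)).1 (by linarith))
    have hm2 : MonotoneOn f (Icc (s i) (s (i+1))) :=
      hfup.mono (Icc_subset_Icc (hs_mem i (by omega)).1 hmfu)
    have hx1 : (s (i-1) + s i) / 2 ≤ x i := by
      rw [hx i h1 (by omega)]
      exact condMean_ge_mid f hf_cont _ _ hsk hm1 (hD i h1 (by omega))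
    have hx2 : (s i + s (i+1)) / 2 ≤ x (i+1) := by
      have := hx (i+1) (by omega) hiN
      have e : (i+1) - 1 = i := by omega
      rw [e] at this
      rw [this]
      have hDi : 0 < ∫ t in (s i)..(s (i+1)), f t := by
        have := hD (i+1) (by omega) hiN
        rwa [e] at this
      exact condMean_ge_mid f hf_cont _ _ hsk2 hm2 hDi
    have hm := hmid i h1 (by omega)
    linarith
  -- right increasing step
  have wright : ∀ i, j + 1 ≤ i → i + 1 ≤ N → s i - s (i-1) ≤ s (i+1) - s i := by
    intro i h1 h2
    have hsk : s (i-1) < s i := by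
      have := hmono (i-1) (by omega)
      have e : i - 1 + 1 = i := by omega
      rwa [e] at this
    have hsk2 : s i < s (i+1) := hmono i (by omega)
    have hmfl : mf ≤ s (i-1) := le_trans hmfj.2 (hle j (i-1) (by omega) (by omega))
    have hm1 : AntitoneOn f (Icc (s (i-1)) (s i)) :=
      hfdown.mono (Icc_subset_Icc hmfl (hs_mem i (by omega)).2)
    have hm2 : AntitoneOn f (Icc (s i) (s (i+1))) :=
      hfdown.mono (Icc_subset_Icc (by linarith) (hs_mem (i+1) (by omega)).2)
    have hx1 : x i ≤ (s (i-1) + s i) / 2 := by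
      rw [hx i (by omega) (by omega)]
      exact condMean_le_mid f hf_cont _ _ hsk hm1 (hD i (by omega) (by omega))
    have hx2 : x (i+1) ≤ (s i + s (i+1)) / 2 := by
      have := hx (i+1) (by omega) h2
      have e : (i+1) - 1 = i := by omega
      rw [e] at this
      rw [this]
      have hDi : 0 < ∫ t in (s i)..(s (i+1)), f t := by
        have := hD (i+1) (by omega) h2
        rwa [e] at this
      exact condMean_le_mid f hf_cont _ _ hsk2 hm2 hDi
    have hm := hmid i (by omega) (by omega)
    linarith
  -- chains
  have chainL : ∀ a b, 1 ≤ a → a ≤ b → b ≤ j - 1 →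
      s b - s (b-1) ≤ s a - s (a-1) := by
    intro a b h1 h2 h3
    induction b with
    | zero => omega
    | succ n ih =>
      rcases Nat.lt_succ_iff_lt_or_eq.mp (Nat.lt_succ_of_le h2) with h | h
      · have hn : a ≤ n := by omega
        have step := wleft n (by omega) (by omega)
        have e : n + 1 - 1 = n := by omega
        rw [e]
        exact le_trans step (ih hn (by omega))
      · subst h; exact le_rfl
  have chainR : ∀ a b, j + 1 ≤ a → a ≤ b → b ≤ N →
      s a - s (a-1) ≤ s b - s (b-1) := by
    intro a b h1 h2 h3
    induction b with
    | zero => omega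
    | succ n ih =>
      rcases Nat.lt_succ_iff_lt_or_eq.mp (Nat.lt_succ_of_le h2) with h | h
      · have hn : a ≤ n := by omega
        have step := wright n (by omega) (by omega)
        have e : n + 1 - 1 = n := by omega
        rw [e]
        exact le_trans (ih hn (by omega)) step
      · subst h; exact le_rfl
  -- candidates
  set L := max (j-1) 1 with hL
  set R := min (j+1) N with hR
  set wf : ℕ → ℝ := fun k => s k - s (k-1) with hwf
  have hLN : 1 ≤ L ∧ L ≤ N := ⟨le_max_right _ _, by omega⟩
  have hRN : 1 ≤ R ∧ R ≤ N := ⟨by omega, min_le_right _ _⟩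
  have hmin : ∀ i, 1 ≤ i → i ≤ N →
      min (min (wf L) (wf j)) (wf R) ≤ wf i := by
    intro i h1 h2
    rcases lt_trichotomy i j with h | h | h
    · have hiL : i ≤ j - 1 := by omega
      have hLe : L = j - 1 := by omega
      calc min (min (wf L) (wf j)) (wf R) ≤ wf L :=
            le_trans (min_le_left _ _) (min_le_left _ _)
        _ ≤ wf i := by rw [hLe]; exact chainL i (j-1) h1 hiL le_rfl
    · subst h
      exact le_trans (min_le_left _ _) (min_le_right _ _)
    · have hRe : R = j + 1 := by omega
      calc min (min (wf L) (wf j)) (wf R) ≤ wf R := min_le_right _ _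
        _ ≤ wf i := by rw [hRe]; exact chainR (j+1) i le_rfl (by omega) h2
  by_cases h1 : wf L ≤ wf j ∧ wf L ≤ wf R
  · refine ⟨L, hLN.1, hLN.2, by omega, by omega, fun i hi1 hi2 => ?_⟩
    exact le_trans (le_min (le_min le_rfl h1.1) h1.2) (hmin i hi1 hi2)
  · by_cases h2 : wf j ≤ wf R
    · refine ⟨j, hj1, hjN, by omega, by omega, fun i hi1 hi2 => ?_⟩
      have hjL : wf j ≤ wf L ∨ wf R < wf L := by
        by_contra hcon
        push_neg at hcon
        exact h1 ⟨by linarith [hcon.1], by linarith [hcon.2]⟩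
      have hjle : wf j ≤ wf L := by
        rcases hjL with h | h
        · exact h
        · linarith
      exact le_trans (le_min (le_min hjle le_rfl) h2) (hmin i hi1 hi2)
    · push_neg at h2
      refine ⟨R, hRN.1, hRN.2, by omega, min_le_left _ _, fun i hi1 hi2 => ?_⟩
      have hRL : wf R ≤ wf L := by
        by_contra hcon
        push_neg at hcon
        exact h1 ⟨by linarith, by linarith⟩
      exact le_trans (le_min (le_min hRL h2.le) le_rfl) (hmin i hi1 hi2)
end

section
/- Let u and û both be twice continuously differentiable on [0,1] with u'' > 0 and û'' > 0, such that f, u'' and û'' are all logconcave and the ratio û''(t)/u''(t) is nondecreasing in t. Let (0 = s₀ < s₁ < … < s_N = 1; x₁,…,x_N) be a solution of the dual system for (f, u), and let (0 = ŝ₀ < ŝ₁ < … < ŝ_N = 1; x̂₁,…,x̂_N) be a solution of the dual system for (f, û), i.e., with μ replaced by the conditional mean μ̂ computed from û''. Then ŝ_k ≥ s_k for all k = 1,…,N−1 and x̂_k ≥ x_k for all k = 1,…,N. -/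
/-!
Logconcavity of a density `g` makes its conditional mean `φ_g` at most 1-Lipschitz under
translation, `φ_g (a + c) (b + c) ≤ φ_g a b + c`, because `g / g (· + c)` is nondecreasing and a
monotone likelihood ratio orders conditional means. Combined with monotonicity of `φ_g` in both
endpoints: raising the endpoints by at most `c`, the left one strictly less, raises the mean by
strictly less than `c`. Likewise the nondecreasing ratio `û'' / u''` gives `μ_u ≤ μ_û` on every
interval.

Let `ε` be the largest of the differences `s k - ŝ k` and `x k - x̂ k`. If `ε > 0`, the two facts
propagate the strict bound `< ε` from `s 0 - ŝ 0 = 0` alternately through `x 1, s 1, x 2, …` up to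
`s N - ŝ N = 0`, so `ε` is never attained: a discrete maximum principle.
-/

open MeasureTheory Set

/-- A strictly positive function on `[0,1]` is logconcave if its log is concave there. -/
def LogConcaveOn01 (g : ℝ → ℝ) : Prop :=
  ConcaveOn ℝ (Icc (0:ℝ) 1) fun t => Real.log (g t)

section CondMean

variable {g : ℝ → ℝ} {a b : ℝ}

lemma integral_sub_mul_eq (hg : Continuous g) (a b m : ℝ) :
    ∫ t in a..b, (t - m) * g t = (∫ t in a..b, t * g t) - m * ∫ t in a..b, g t := by
  simp_rw [sub_mul]
  rw [intervalIntegral.integral_sub (Continuous.intervalIntegrable (by fun_prop) a b)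
    (Continuous.intervalIntegrable (by fun_prop) a b), intervalIntegral.integral_const_mul]

lemma integral_pos_of_pos_on_Icc (hg : Continuous g) (hab : a < b)
    (hpos : ∀ t ∈ Icc a b, 0 < g t) : 0 < ∫ t in a..b, g t :=
  intervalIntegral.intervalIntegral_pos_of_pos_on (hg.intervalIntegrable a b)
    (fun t ht => hpos t (Ioo_subset_Icc_self ht)) hab

lemma integral_neg_of_neg_on {f : ℝ → ℝ} (hf : IntervalIntegrable f volume a b)
    (hneg : ∀ t ∈ Ioo a b, f t < 0) (hab : a < b) : ∫ t in a..b, f t < 0 := by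
  have := intervalIntegral.intervalIntegral_pos_of_pos_on hf.neg
    (fun t ht => neg_pos.2 (hneg t ht)) hab
  rwa [Pi.neg_def, intervalIntegral.integral_neg, neg_pos] at this

variable (hg : Continuous g) (hab : a < b) (hpos : ∀ t ∈ Icc a b, 0 < g t)
include hg hab hpos

lemma lt_condMean_iff (m : ℝ) : m < condMean g a b ↔ 0 < ∫ t in a..b, (t - m) * g t := by
  rw [condMean, lt_div_iff₀ (integral_pos_of_pos_on_Icc hg hab hpos),
    integral_sub_mul_eq hg, sub_pos]

lemma condMean_lt_iff (m : ℝ) : condMean g a b < m ↔ ∫ t in a..b, (t - m) * g t < 0 := by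
  rw [condMean, div_lt_iff₀ (integral_pos_of_pos_on_Icc hg hab hpos),
    integral_sub_mul_eq hg, sub_neg]

lemma integral_sub_condMean_mul : ∫ t in a..b, (t - condMean g a b) * g t = 0 := by
  rw [integral_sub_mul_eq hg, condMean,
    div_mul_cancel₀ _ (integral_pos_of_pos_on_Icc hg hab hpos).ne', sub_self]

lemma condMean_mem_Ioo_s7 : condMean g a b ∈ Ioo a b := by
  refine ⟨(lt_condMean_iff hg hab hpos a).2 ?_, (condMean_lt_iff hg hab hpos b).2 ?_⟩
  · exact intervalIntegral.intervalIntegral_pos_of_pos_on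
      (Continuous.intervalIntegrable (by fun_prop) a b)
      (fun t ht => mul_pos (sub_pos.2 ht.1) (hpos t (Ioo_subset_Icc_self ht))) hab
  · exact integral_neg_of_neg_on (Continuous.intervalIntegrable (by fun_prop) a b)
      (fun t ht => mul_neg_of_neg_of_pos (sub_neg.2 ht.2) (hpos t (Ioo_subset_Icc_self ht)))
      hab

end CondMean

section Monotone

variable {g : ℝ → ℝ} (hg : Continuous g)
include hg

lemma condMean_lt_condMean_right {a b b' : ℝ} (hab : a < b) (hbb' : b < b')
    (hpos : ∀ t ∈ Icc a b', 0 < g t) : condMean g a b < condMean g a b' := by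
  have hpos_ab : ∀ t ∈ Icc a b, 0 < g t := fun t ht => hpos t ⟨ht.1, ht.2.trans hbb'.le⟩
  set m := condMean g a b
  have hmb : m < b := (condMean_mem_Ioo_s7 hg hab hpos_ab).2
  have hc : Continuous fun t => (t - m) * g t := by fun_prop
  have htail : 0 < ∫ t in b..b', (t - m) * g t :=
    intervalIntegral.intervalIntegral_pos_of_pos_on (hc.intervalIntegrable b b')
      (fun t ht => mul_pos (by linarith [ht.1]) (hpos t ⟨by linarith [ht.1], ht.2.le⟩)) hbb'
  have hsplit := intervalIntegral.integral_add_adjacent_intervals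
    (hc.intervalIntegrable (μ := volume) a b) (hc.intervalIntegrable b b')
  rw [integral_sub_condMean_mul hg hab hpos_ab] at hsplit
  rw [lt_condMean_iff hg (hab.trans hbb') hpos]
  linarith

lemma condMean_lt_condMean_left {a a' b : ℝ} (haa' : a < a') (hab : a' < b)
    (hpos : ∀ t ∈ Icc a b, 0 < g t) : condMean g a b < condMean g a' b := by
  have hpos_a'b : ∀ t ∈ Icc a' b, 0 < g t := fun t ht => hpos t ⟨haa'.le.trans ht.1, ht.2⟩
  set m := condMean g a b
  rcases le_or_gt a' m with hm | hm
  · have hhead : ∫ t in a..a', (t - m) * g t < 0 :=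
      integral_neg_of_neg_on (Continuous.intervalIntegrable (by fun_prop) _ _)
        (fun t ht => mul_neg_of_neg_of_pos (by linarith [ht.2])
          (hpos t ⟨ht.1.le, by linarith [ht.2]⟩)) haa'
    have hc : Continuous fun t => (t - m) * g t := by fun_prop
    have hsplit := intervalIntegral.integral_add_adjacent_intervals
      (hc.intervalIntegrable (μ := volume) a a') (hc.intervalIntegrable a' b)
    rw [integral_sub_condMean_mul hg (haa'.trans hab) hpos] at hsplit
    rw [lt_condMean_iff hg hab hpos_a'b]
    linarith
  · exact hm.trans (condMean_mem_Ioo_s7 hg hab hpos_a'b).1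

lemma condMean_le_condMean {a₁ b₁ a₂ b₂ : ℝ} (hab₁ : a₁ < b₁) (hab₂ : a₂ < b₂)
    (ha : a₁ ≤ a₂) (hb : b₁ ≤ b₂) (hpos : ∀ t ∈ Icc a₁ b₂, 0 < g t) :
    condMean g a₁ b₁ ≤ condMean g a₂ b₂ := by
  have hpos₁ : ∀ t ∈ Icc a₁ b₁, 0 < g t := fun t ht => hpos t ⟨ht.1, ht.2.trans hb⟩
  have hpos₂ : ∀ t ∈ Icc a₂ b₂, 0 < g t := fun t ht => hpos t ⟨ha.trans ht.1, ht.2⟩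
  rcases lt_or_ge a₂ b₁ with hab | hba
  · calc condMean g a₁ b₁ ≤ condMean g a₂ b₁ := by
          rcases ha.eq_or_lt with rfl | ha
          · rfl
          · exact (condMean_lt_condMean_left hg ha hab hpos₁).le
      _ ≤ condMean g a₂ b₂ := by
          rcases hb.eq_or_lt with rfl | hb
          · rfl
          · exact (condMean_lt_condMean_right hg hab hb hpos₂).le
  · linarith [(condMean_mem_Ioo_s7 hg hab₁ hpos₁).2, (condMean_mem_Ioo_s7 hg hab₂ hpos₂).1]

end Monotone

lemma condMean_le_condMean_of_monotoneOn_div {g h : ℝ → ℝ} {a b : ℝ}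
    (hg : Continuous g) (hh : Continuous h) (hab : a < b)
    (hgpos : ∀ t ∈ Icc a b, 0 < g t) (hhpos : ∀ t ∈ Icc a b, 0 < h t)
    (hmono : MonotoneOn (fun t => h t / g t) (Icc a b)) :
    condMean g a b ≤ condMean h a b := by
  set m := condMean g a b
  have hm : m ∈ Icc a b := Ioo_subset_Icc_self (condMean_mem_Ioo_s7 hg hab hgpos)
  set r := h m / g m
  have hpointwise : ∀ t ∈ Icc a b, r * ((t - m) * g t) ≤ (t - m) * h t := by
    intro t ht
    rw [mul_left_comm]
    rcases le_total t m with htm | hmt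
    · have : h t ≤ r * g t := (div_le_iff₀ (hgpos t ht)).1 (hmono ht hm htm)
      exact mul_le_mul_of_nonpos_left this (sub_nonpos.2 htm)
    · have : r * g t ≤ h t := (le_div_iff₀ (hgpos t ht)).1 (hmono hm ht hmt)
      exact mul_le_mul_of_nonneg_left this (sub_nonneg.2 hmt)
  have hint : 0 ≤ ∫ t in a..b, (t - m) * h t := by
    have := intervalIntegral.integral_mono_on hab.le
      (Continuous.intervalIntegrable (μ := volume) (by fun_prop) a b)
      (Continuous.intervalIntegrable (by fun_prop) a b) hpointwise
    rwa [intervalIntegral.integral_const_mul, integral_sub_condMean_mul hg hab hgpos,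
      mul_zero] at this
  exact not_lt.1 fun hlt => ((condMean_lt_iff hh hab hhpos m).1 hlt).not_ge hint

lemma ConcaveOn.map_add_sub_map_le {s : Set ℝ} {φ : ℝ → ℝ} (hφ : ConcaveOn ℝ s φ)
    {t t' c : ℝ} (ht : t ∈ s) (ht'c : t' + c ∈ s) (htt' : t ≤ t') (hc : 0 ≤ c) :
    φ (t' + c) - φ t' ≤ φ (t + c) - φ t := by
  rcases (add_nonneg (sub_nonneg.2 htt') hc).eq_or_lt with hL | hL
  · obtain ⟨rfl, rfl⟩ : t' = t ∧ c = 0 := ⟨by linarith, by linarith⟩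
    rfl
  -- `t + c` and `t'` are the two convex combinations of `t` and `t' + c` with swapped weights
  set L := t' - t + c with hL_def
  have hw₁ : 0 ≤ (t' - t) / L := div_nonneg (sub_nonneg.2 htt') hL.le
  have hw₂ : 0 ≤ c / L := div_nonneg hc hL.le
  have hsum : (t' - t) / L + c / L = 1 := by rw [← add_div, div_self hL.ne']
  have h₁ := hφ.2 ht ht'c hw₁ hw₂ hsum
  have h₂ := hφ.2 ht ht'c hw₂ hw₁ (by rwa [add_comm])
  have e₁ : ((t' - t) / L) • t + (c / L) • (t' + c) = t + c := by
    simp only [smul_eq_mul]; field_simp; rw [hL_def]; ring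
  have e₂ : (c / L) • t + ((t' - t) / L) • (t' + c) = t' := by
    simp only [smul_eq_mul]; field_simp; rw [hL_def]; ring
  rw [e₁] at h₁
  rw [e₂] at h₂
  simp only [smul_eq_mul] at h₁ h₂
  linear_combination h₁ + h₂ - (φ t + φ (t' + c)) * hsum

lemma condMean_add_add {g : ℝ → ℝ} {a b c : ℝ} (hg : Continuous g) (hab : a < b)
    (hpos : ∀ t ∈ Icc a b, 0 < g (t + c)) :
    condMean g (a + c) (b + c) = condMean (fun t => g (t + c)) a b + c := by
  have hnum : ∫ t in (a + c)..(b + c), t * g t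
      = (∫ t in a..b, t * g (t + c)) + c * ∫ t in a..b, g (t + c) := by
    rw [← intervalIntegral.integral_comp_add_right (fun t => t * g t), ←
      intervalIntegral.integral_const_mul, ← intervalIntegral.integral_add
      (Continuous.intervalIntegrable (by fun_prop) a b)
      (Continuous.intervalIntegrable (by fun_prop) a b)]
    simp only [add_mul]
  have hden := integral_pos_of_pos_on_Icc (by fun_prop) hab hpos
  rw [condMean, condMean, hnum, ← intervalIntegral.integral_comp_add_right g c]
  field_simp

section LogConcave

variable {g : ℝ → ℝ} (hg : Continuous g) (hlc : LogConcaveOn01 g)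
  (hpos : ∀ t ∈ Icc (0:ℝ) 1, 0 < g t)

include hlc hpos in
lemma LogConcaveOn01.monotoneOn_div_comp_add {a b c : ℝ} (ha : 0 ≤ a) (hc : 0 ≤ c)
    (hbc : b + c ≤ 1) : MonotoneOn (fun t => g t / g (t + c)) (Icc a b) := by
  intro t ht t' ht' htt'
  have hmem : ∀ x ∈ Icc a b, x ∈ Icc (0:ℝ) 1 ∧ x + c ∈ Icc (0:ℝ) 1 := fun x hx =>
    ⟨⟨ha.trans hx.1, by linarith [hx.2]⟩, ⟨by linarith [hx.1], by linarith [hx.2]⟩⟩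
  obtain ⟨hmt, hmtc⟩ := hmem t ht
  obtain ⟨hmt', hmt'c⟩ := hmem t' ht'
  have := hlc.map_add_sub_map_le hmt hmt'c htt' hc
  rw [← Real.log_le_log_iff (div_pos (hpos t hmt) (hpos _ hmtc))
    (div_pos (hpos t' hmt') (hpos _ hmt'c)), Real.log_div (hpos t hmt).ne' (hpos _ hmtc).ne',
    Real.log_div (hpos t' hmt').ne' (hpos _ hmt'c).ne']
  linarith

include hg hlc hpos

lemma LogConcaveOn01.condMean_add_add_le {a b c : ℝ} (ha : 0 ≤ a) (hab : a < b) (hc : 0 ≤ c)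
    (hbc : b + c ≤ 1) : condMean g (a + c) (b + c) ≤ condMean g a b + c := by
  have hpos_ab : ∀ t ∈ Icc a b, 0 < g t := fun t ht =>
    hpos t ⟨ha.trans ht.1, by linarith [ht.2]⟩
  have hpos_shift : ∀ t ∈ Icc a b, 0 < g (t + c) := fun t ht =>
    hpos _ ⟨by linarith [ht.1], by linarith [ht.2]⟩
  rw [condMean_add_add hg hab hpos_shift]
  gcongr
  exact condMean_le_condMean_of_monotoneOn_div (by fun_prop) hg hab hpos_shift hpos_ab
    (hlc.monotoneOn_div_comp_add hpos ha hc hbc)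

lemma LogConcaveOn01.condMean_le_condMean_add {a b a' b' c : ℝ} (ha : 0 ≤ a) (hab : a < b)
    (hb : b ≤ 1) (ha' : 0 ≤ a') (hab' : a' < b') (hb' : b' ≤ 1) (hc : 0 ≤ c)
    (ha'c : a' ≤ a + c) (hb'c : b' ≤ b + c) :
    condMean g a' b' ≤ condMean g a b + c := by
  -- Either `(a', b')` lies below the translate of `(a, b)` by `d = max (b' - b) 0 ≤ c`,
  -- or it is the translate of `(a, b' - e)` by `e = a' - a ≤ c`, with `b' - e ≤ b`.
  set d := max (b' - b) 0
  have hd : 0 ≤ d := le_max_right _ _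
  have hdc : d ≤ c := max_le (by linarith) hc
  have hbd : d ≤ 1 - b := max_le (by linarith) (by linarith)
  rcases le_or_gt a' (a + d) with had | had
  · calc condMean g a' b' ≤ condMean g (a + d) (b + d) :=
          condMean_le_condMean hg hab' (by linarith) had (by linarith [le_max_left (b' - b) 0])
            fun t ht => hpos t ⟨ha'.trans ht.1, by linarith [ht.2]⟩
      _ ≤ condMean g a b + d := hlc.condMean_add_add_le hg hpos ha hab hd (by linarith)
      _ ≤ condMean g a b + c := by linarith
  · set e := a' - a
    have hb'e : b' - e ≤ b := by linarith [le_max_left (b' - b) 0]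
    calc condMean g a' b' = condMean g (a + e) (b' - e + e) := by
          simp only [e, add_sub_cancel, sub_add_cancel]
      _ ≤ condMean g a (b' - e) + e :=
          hlc.condMean_add_add_le hg hpos ha (by linarith) (by linarith) (by linarith)
      _ ≤ condMean g a b + e := by
          gcongr
          exact condMean_le_condMean hg (by linarith) hab le_rfl hb'e
            fun t ht => hpos t ⟨ha.trans ht.1, ht.2.trans hb⟩
      _ ≤ condMean g a b + c := by linarith

lemma LogConcaveOn01.condMean_lt_condMean_add {a b a' b' c : ℝ} (ha : 0 ≤ a) (hab : a < b)
    (hb : b ≤ 1) (ha' : 0 ≤ a') (hab' : a' < b') (hb' : b' ≤ 1) (hc : 0 ≤ c)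
    (ha'c : a' < a + c) (hb'c : b' ≤ b + c) :
    condMean g a' b' < condMean g a b + c := by
  set a'' := min (a + c) ((a' + b') / 2)
  have ha'a'' : a' < a'' := lt_min ha'c (by linarith)
  have ha''b' : a'' < b' := (min_le_right _ _).trans_lt (by linarith)
  calc condMean g a' b' < condMean g a'' b' :=
        condMean_lt_condMean_left hg ha'a'' ha''b' fun t ht =>
          hpos t ⟨ha'.trans ht.1, ht.2.trans hb'⟩
    _ ≤ condMean g a b + c :=
        hlc.condMean_le_condMean_add hg hpos ha hab hb (by linarith) ha''b' hb' hc
          (min_le_left _ _) hb'c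

end LogConcave

theorem nonpos_of_strict_max_principle {σ ξ : ℕ → ℝ} {N : ℕ} (hσ₀ : σ 0 ≤ 0) (hσN : σ N ≤ 0)
    (hξ : ∀ k < N, ∀ ε > 0, σ k < ε → σ (k + 1) ≤ ε → ξ (k + 1) < ε)
    (hσ : ∀ k, 0 < k → k < N → ∀ ε > 0, ξ k < ε → ξ (k + 1) ≤ ε → σ k < ε) :
    (∀ k ≤ N, σ k ≤ 0) ∧ ∀ k, 1 ≤ k → k ≤ N → ξ k ≤ 0 := by
  classical
  set D := (Finset.range (N + 1)).image σ ∪ (Finset.Icc 1 N).image ξ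
  have hD : D.Nonempty := ⟨σ 0, Finset.mem_union_left _ (Finset.mem_image_of_mem _ (by simp))⟩
  set ε := D.max' hD
  have hσ_le : ∀ k ≤ N, σ k ≤ ε := fun k hk => D.le_max' _ <|
    Finset.mem_union_left _ (Finset.mem_image_of_mem _ (Finset.mem_range.2 (by omega)))
  have hξ_le : ∀ k, 1 ≤ k → k ≤ N → ξ k ≤ ε := fun k hk₁ hkN => D.le_max' _ <|
    Finset.mem_union_right _ (Finset.mem_image_of_mem _ (Finset.mem_Icc.2 ⟨hk₁, hkN⟩))
  suffices hε : ε ≤ 0 from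
    ⟨fun k hk => (hσ_le k hk).trans hε, fun k hk₁ hkN => (hξ_le k hk₁ hkN).trans hε⟩
  by_contra! hε
  have hlt : ∀ k ≤ N, σ k < ε ∧ (1 ≤ k → ξ k < ε) := by
    intro k
    induction k with
    | zero => exact fun _ => ⟨hσ₀.trans_lt hε, fun h => absurd h (by omega)⟩
    | succ k ih =>
      intro hk
      have hξk : ξ (k + 1) < ε := hξ k hk ε hε (ih (by omega)).1 (hσ_le _ hk)
      refine ⟨?_, fun _ => hξk⟩
      rcases hk.eq_or_lt with hkN | hkN
      · exact hkN ▸ hσN.trans_lt hε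
      · exact hσ (k + 1) (by omega) hkN ε hε hξk (hξ_le _ (by omega) (by omega))
  have hmem := D.max'_mem hD
  simp only [D, Finset.mem_union, Finset.mem_image, Finset.mem_range, Finset.mem_Icc] at hmem
  rcases hmem with ⟨k, hk, hkε⟩ | ⟨k, ⟨hk₁, hkN⟩, hkε⟩
  · exact (hlt k (by omega)).1.ne hkε
  · exact ((hlt k hkN).2 hk₁).ne hkε

namespace DualSystem

variable {g w : ℝ → ℝ} {N : ℕ} {s x : ℕ → ℝ}

lemma cutoff_mem_Icc (hsys : DualSystem g w N s x) {k : ℕ} (hk : k ≤ N) :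
    s k ∈ Icc (0:ℝ) 1 := by
  obtain ⟨hs₀, hsN, hs_lt, -⟩ := hsys
  have hmono := (strictMonoOn_Iic_of_lt_succ (n := N) fun m hm => hs_lt m hm).monotoneOn
  exact ⟨hs₀ ▸ hmono (Nat.zero_le N) hk (Nat.zero_le k), hsN ▸ hmono hk (le_refl N) hk⟩

lemma signal_succ_eq (hsys : DualSystem g w N s x) {k : ℕ} (hk : k < N) :
    x (k + 1) = condMean g (s k) (s (k + 1)) :=
  hsys.2.2.2.1 (k + 1) (by omega) hk

lemma cutoff_eq (hsys : DualSystem g w N s x) {k : ℕ} (hk₀ : 0 < k) (hk : k < N) :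
    s k = condMean w (x k) (x (k + 1)) :=
  hsys.2.2.2.2 k hk₀ (by omega)

variable (hg : Continuous g) (hpos : ∀ t ∈ Icc (0:ℝ) 1, 0 < g t)
include hg hpos

lemma signal_succ_mem_Ioo (hsys : DualSystem g w N s x) {k : ℕ} (hk : k < N) :
    x (k + 1) ∈ Ioo (s k) (s (k + 1)) := by
  rw [hsys.signal_succ_eq hk]
  exact condMean_mem_Ioo_s7 hg (hsys.2.2.1 k hk) fun t ht =>
    hpos t ⟨(hsys.cutoff_mem_Icc hk.le).1.trans ht.1, ht.2.trans (hsys.cutoff_mem_Icc hk).2⟩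

lemma signal_mem_Icc (hsys : DualSystem g w N s x) {k : ℕ} (hk₀ : 0 < k) (hk : k ≤ N) :
    x k ∈ Icc (0:ℝ) 1 := by
  obtain ⟨k, rfl⟩ : ∃ j, k = j + 1 := ⟨k - 1, by omega⟩
  have hmem := hsys.signal_succ_mem_Ioo hg hpos (k := k) (by omega)
  exact ⟨(hsys.cutoff_mem_Icc (by omega)).1.trans hmem.1.le,
    hmem.2.le.trans (hsys.cutoff_mem_Icc (by omega)).2⟩

lemma signal_lt_signal_succ (hsys : DualSystem g w N s x) {k : ℕ} (hk₀ : 0 < k)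
    (hk : k < N) : x k < x (k + 1) := by
  obtain ⟨k, rfl⟩ : ∃ j, k = j + 1 := ⟨k - 1, by omega⟩
  exact (hsys.signal_succ_mem_Ioo hg hpos (by omega)).2.trans
    (hsys.signal_succ_mem_Ioo hg hpos hk).1

end DualSystem

section Comparison

variable {g w w' : ℝ → ℝ} {N : ℕ} {s x s' x' : ℕ → ℝ}
  (hg : Continuous g) (hgpos : ∀ t ∈ Icc (0:ℝ) 1, 0 < g t)
  (h₁ : DualSystem g w N s x) (h₂ : DualSystem g w' N s' x')
include hg hgpos h₁ h₂

lemma DualSystem.signal_sub_lt_of_cutoff_sub (hlc : LogConcaveOn01 g) {k : ℕ} (hk : k < N)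
    {ε : ℝ} (hε : 0 ≤ ε) (hlt : s k - s' k < ε) (hle : s (k + 1) - s' (k + 1) ≤ ε) :
    x (k + 1) - x' (k + 1) < ε := by
  rw [h₁.signal_succ_eq hk, h₂.signal_succ_eq hk, sub_lt_iff_lt_add']
  exact hlc.condMean_lt_condMean_add hg hgpos (h₂.cutoff_mem_Icc hk.le).1 (h₂.2.2.1 k hk)
    (h₂.cutoff_mem_Icc hk).2 (h₁.cutoff_mem_Icc hk.le).1 (h₁.2.2.1 k hk) (h₁.cutoff_mem_Icc hk).2
    hε (by linarith) (by linarith)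

lemma DualSystem.cutoff_sub_lt_of_signal_sub (hw : Continuous w) (hw' : Continuous w')
    (hwpos : ∀ t ∈ Icc (0:ℝ) 1, 0 < w t) (hw'pos : ∀ t ∈ Icc (0:ℝ) 1, 0 < w' t)
    (hw'lc : LogConcaveOn01 w') (hratio : MonotoneOn (fun t => w' t / w t) (Icc (0:ℝ) 1))
    {k : ℕ} (hk₀ : 0 < k) (hk : k < N) {ε : ℝ} (hε : 0 ≤ ε) (hlt : x k - x' k < ε)
    (hle : x (k + 1) - x' (k + 1) ≤ ε) : s k - s' k < ε := by
  have hx := h₁.signal_mem_Icc hg hgpos hk₀ hk.le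
  have hx_succ := h₁.signal_mem_Icc hg hgpos (k := k + 1) (by omega) hk
  have hsub : Icc (x k) (x (k + 1)) ⊆ Icc 0 1 := Icc_subset_Icc hx.1 hx_succ.2
  have hx_lt := h₁.signal_lt_signal_succ hg hgpos hk₀ hk
  rw [h₁.cutoff_eq hk₀ hk, h₂.cutoff_eq hk₀ hk, sub_lt_iff_lt_add']
  calc condMean w (x k) (x (k + 1)) ≤ condMean w' (x k) (x (k + 1)) :=
        condMean_le_condMean_of_monotoneOn_div hw hw' hx_lt (fun t ht => hwpos t (hsub ht))
          (fun t ht => hw'pos t (hsub ht)) (hratio.mono hsub)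
    _ < condMean w' (x' k) (x' (k + 1)) + ε :=
        hw'lc.condMean_lt_condMean_add hw' hw'pos (h₂.signal_mem_Icc hg hgpos hk₀ hk.le).1
          (h₂.signal_lt_signal_succ hg hgpos hk₀ hk)
          (h₂.signal_mem_Icc hg hgpos (k := k + 1) (by omega) hk).2 hx.1 hx_lt hx_succ.2 hε
          (by linarith) (by linarith)

end Comparison

lemma ContDiff.continuous_deriv_deriv {v : ℝ → ℝ} (hv : ContDiff ℝ 2 v) :
    Continuous (deriv (deriv v)) := by
  simpa only [iteratedDeriv_succ, iteratedDeriv_zero] using hv.continuous_iteratedDeriv 2 le_rfl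

theorem stmt_7_general (f u uhat : ℝ → ℝ) (N : ℕ)
    (hf_cont : Continuous f) (hf_pos : ∀ t ∈ Icc (0:ℝ) 1, 0 < f t)
    (hu : ContDiff ℝ 2 u)
    (hu'' : ∀ t ∈ Icc (0:ℝ) 1, 0 < deriv (deriv u) t)
    (huhat : ContDiff ℝ 2 uhat)
    (huhat'' : ∀ t ∈ Icc (0:ℝ) 1, 0 < deriv (deriv uhat) t)
    (hf_lc : LogConcaveOn01 f)
    (huhat_lc : LogConcaveOn01 (deriv (deriv uhat)))
    (hratio : MonotoneOn (fun t => deriv (deriv uhat) t / deriv (deriv u) t) (Icc (0:ℝ) 1))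
    (s x shat xhat : ℕ → ℝ)
    (h1 : DualSystem f (deriv (deriv u)) N s x)
    (h2 : DualSystem f (deriv (deriv uhat)) N shat xhat) :
    (∀ k, 1 ≤ k → k ≤ N - 1 → s k ≤ shat k) ∧
    (∀ k, 1 ≤ k → k ≤ N → x k ≤ xhat k) := by
  obtain ⟨hs_le, hx_le⟩ := nonpos_of_strict_max_principle
    (σ := fun k => s k - shat k) (ξ := fun k => x k - xhat k)
    (by simp only [h1.1, h2.1, sub_self, le_refl])
    (by simp only [h1.2.1, h2.2.1, sub_self, le_refl])
    (fun k hk ε hε => h1.signal_sub_lt_of_cutoff_sub hf_cont hf_pos h2 hf_lc hk hε.le)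
    (fun k hk₀ hk ε hε => h1.cutoff_sub_lt_of_signal_sub hf_cont hf_pos h2
      hu.continuous_deriv_deriv huhat.continuous_deriv_deriv hu'' huhat'' huhat_lc hratio
      hk₀ hk hε.le)
  exact ⟨fun k _ hk => sub_nonpos.1 (hs_le k (by omega)),
    fun k hk₀ hk => sub_nonpos.1 (hx_le k hk₀ hk)⟩

/-- comparative statics: likelihood-ratio increase of the curvature. -/
theorem stmt_7 (f u uhat : ℝ → ℝ) (N : ℕ) (hN : 2 ≤ N)
    (hf_cont : Continuous f) (hf_pos : ∀ t ∈ Icc (0:ℝ) 1, 0 < f t)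
    (hf_prob : (∫ t in (0:ℝ)..1, f t) = 1)
    (hu : ContDiff ℝ 2 u)
    (hu'' : ∀ t ∈ Icc (0:ℝ) 1, 0 < deriv (deriv u) t)
    (huhat : ContDiff ℝ 2 uhat)
    (huhat'' : ∀ t ∈ Icc (0:ℝ) 1, 0 < deriv (deriv uhat) t)
    (hf_lc : LogConcaveOn01 f) (hu_lc : LogConcaveOn01 (deriv (deriv u)))
    (huhat_lc : LogConcaveOn01 (deriv (deriv uhat)))
    (hratio : MonotoneOn (fun t => deriv (deriv uhat) t / deriv (deriv u) t) (Icc (0:ℝ) 1))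
    (s x shat xhat : ℕ → ℝ)
    (h1 : DualSystem f (deriv (deriv u)) N s x)
    (h2 : DualSystem f (deriv (deriv uhat)) N shat xhat) :
    (∀ k, 1 ≤ k → k ≤ N - 1 → s k ≤ shat k) ∧
    (∀ k, 1 ≤ k → k ≤ N → x k ≤ xhat k) :=
  stmt_7_general f u uhat N hf_cont hf_pos hu hu'' huhat huhat'' hf_lc huhat_lc hratio s x shat xhat
    h1 h2
end
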